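/- Let n ≥ 1, L > 0, and let f : ℝⁿ → ℝ belong to F_{−L,L} (in particular, any L-smooth function) with a global minimizer x⋆ and minimum value f⋆. Suppose f is (γ, μ_s)-quasar-convex with respect to x⋆ on the sublevel set X = {x : f(x) ≤ f(x¹)} of a point x¹ ∈ ℝⁿ, for some γ ∈ (0, 1] and μ_s > 0 with μ_s γ² ≤ L. If x² = x¹ − (1/L)∇f(x¹), then f(x²) − f⋆ ≤ ((2L − 2μ_s γ²)/(2L + μ_s γ²)) · (f(x¹) − f⋆). -/

import Mathlib

/-!
The two convexity hypotheses say that `f` lies between the quadratics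
`f x + ⟪∇f x, y - x⟫ ± L/2 ‖y - x‖²`. Evaluating the upper one from `x¹` and the lower one from
`x²` at the point `z = x² + (1/(2L)) ∇f x²` gives the sufficient decrease
`f x² ≤ f x¹ - ‖∇f x¹‖²/(2L) - ‖∇f x²‖²/(4L)`; in particular `x²` stays in the sublevel set, so
quasar-convexity applies at both `x¹` and `x²`. Adding these two quasar-convexity inequalities
(weighted `2μγ²` and `μγ²`), `2L` times the decrease, and the squares
`‖(1 - μγ/L) ∇f x¹ + μγ (x⋆ - x²)‖²` and `½ ‖∇f x² + μγ (x⋆ - x²)‖²` gives exactly the claimed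
contraction.
-/

open Set
open scoped RealInnerProductSpace

theorem ConvexOn.add_fderiv_sub_le {E : Type*} [NormedAddCommGroup E] [NormedSpace ℝ E]
    {φ : E → ℝ} {φ' : E →L[ℝ] ℝ} {x : E} (hφ : ConvexOn ℝ univ φ) (hx : HasFDerivAt φ φ' x)
    (y : E) : φ x + φ' (y - x) ≤ φ y := by
  set ℓ : ℝ →ᵃ[ℝ] E := AffineMap.lineMap x y
  have hline : HasDerivAt (φ ∘ ℓ) (φ' (y - x)) 0 :=
    (by simpa [ℓ] using hx : HasFDerivAt φ φ' (ℓ 0)).comp_hasDerivAt 0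
      AffineMap.hasDerivAt_lineMap
  have h := (hφ.comp_affineMap ℓ).le_slope_of_hasDerivAt (mem_univ 0) (mem_univ 1) zero_lt_one
    hline
  simp only [slope_def_field, Function.comp_apply, ℓ, AffineMap.lineMap_apply_zero,
    AffineMap.lineMap_apply_one, sub_zero, div_one] at h
  linarith

section
variable {E : Type*} [NormedAddCommGroup E] [InnerProductSpace ℝ E] [CompleteSpace E]
  {f : E → ℝ} {g x : E}

theorem add_inner_add_sq_le_of_convexOn_sub_sq {c : ℝ} (hf : HasGradientAt f g x)
    (hc : ConvexOn ℝ univ (fun x => f x - c / 2 * ‖x‖ ^ 2)) (y : E) :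
    f x + ⟪g, y - x⟫ + c / 2 * ‖y - x‖ ^ 2 ≤ f y := by
  have h := hc.add_fderiv_sub_le (hf.hasFDerivAt.sub
    ((hasStrictFDerivAt_norm_sq x).hasFDerivAt.const_mul (c / 2))) y
  rw [norm_sub_sq_real, real_inner_comm x y]
  simp only [sub_apply, smul_apply, InnerProductSpace.toDual_apply_apply, innerSL_apply_apply,
    smul_eq_mul, nsmul_eq_mul, Nat.cast_ofNat, inner_sub_right, real_inner_self_eq_norm_sq] at h ⊢
  linarith

theorem le_add_inner_add_sq_of_convexOn_sq_sub {L : ℝ} (hf : HasGradientAt f g x)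
    (hc : ConvexOn ℝ univ (fun x => L / 2 * ‖x‖ ^ 2 - f x)) (y : E) :
    f y ≤ f x + ⟪g, y - x⟫ + L / 2 * ‖y - x‖ ^ 2 := by
  have hneg : HasGradientAt (fun x => -f x) (-g) x := by
    rw [hasGradientAt_iff_hasFDerivAt, map_neg]
    exact hf.hasFDerivAt.neg
  have h := add_inner_add_sq_le_of_convexOn_sub_sq (c := -L) hneg (by convert hc using 2; ring) y
  rw [inner_neg_left] at h
  linarith

end

section
variable {E : Type*} [NormedAddCommGroup E] [InnerProductSpace ℝ E]

theorem apply_sub_smul_gradient_le {f : E → ℝ} {f' : E → E} {L : ℝ} (hL : 0 < L)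
    (hup : ∀ x y, f y ≤ f x + ⟪f' x, y - x⟫ + L / 2 * ‖y - x‖ ^ 2)
    (hlo : ∀ x y, f x + ⟪f' x, y - x⟫ - L / 2 * ‖y - x‖ ^ 2 ≤ f y) (x : E) :
    f (x - (1 / L) • f' x) ≤
      f x - ‖f' x‖ ^ 2 / (2 * L) - ‖f' (x - (1 / L) • f' x)‖ ^ 2 / (4 * L) := by
  set x' := x - (1 / L) • f' x
  set z := x' + (1 / (2 * L)) • f' x'
  have h₁ := hlo x' z
  have h₂ := hup x z
  have hz' : z - x' = (1 / (2 * L)) • f' x' := by simp [z]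
  have hz : z - x = (1 / (2 * L)) • f' x' - (1 / L) • f' x := by simp [z, x']; abel
  rw [hz'] at h₁
  rw [hz] at h₂
  simp only [inner_sub_right, inner_smul_right, norm_sub_sq_real, norm_smul, inner_smul_left,
    real_inner_self_eq_norm_sq, mul_pow, Real.norm_eq_abs, sq_abs, RCLike.conj_to_real] at h₁ h₂
  rw [real_inner_comm (f' x)] at h₂
  field_simp at h₁ h₂ ⊢
  linarith

theorem sub_le_of_quasarConvex_of_gradient_step {f : E → ℝ} {x x' xstar g g' : E} {L γ μ : ℝ}
    (hL : 0 < L) (hγ : γ ≠ 0) (hμ : 0 ≤ μ) (hx' : x' = x - (1 / L) • g)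
    (hdecr : f x' ≤ f x - ‖g‖ ^ 2 / (2 * L) - ‖g'‖ ^ 2 / (4 * L))
    (hq : f x + (1 / γ) * ⟪g, xstar - x⟫ + μ / 2 * ‖xstar - x‖ ^ 2 ≤ f xstar)
    (hq' : f x' + (1 / γ) * ⟪g', xstar - x'⟫ + μ / 2 * ‖xstar - x'‖ ^ 2 ≤ f xstar) :
    f x' - f xstar ≤ (2 * L - 2 * μ * γ ^ 2) / (2 * L + μ * γ ^ 2) * (f x - f xstar) := by
  subst hx'
  set w := xstar - (x - (1 / L) • g)
  have hw : xstar - x = w - (1 / L) • g := by simp only [w]; abel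
  rw [hw] at hq
  have hs : 0 ≤ ‖(1 - μ * γ / L) • g + (μ * γ) • w‖ ^ 2 := by positivity
  have hs' : 0 ≤ ‖g' + (μ * γ) • w‖ ^ 2 := by positivity
  simp only [inner_sub_right, inner_smul_right, norm_sub_sq_real, norm_add_sq_real, norm_smul,
    inner_smul_left, real_inner_self_eq_norm_sq, mul_pow, Real.norm_eq_abs,
    sq_abs, RCLike.conj_to_real] at hq hs hs'
  rw [real_inner_comm g w] at hq
  rw [div_mul_eq_mul_div, le_div_iff₀ (by positivity)]
  linear_combination (norm := (field_simp; ring_nf; rfl))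
    (2 * (μ * γ ^ 2)) * hq + (μ * γ ^ 2) * hq' + (2 * L) * hdecr + hs + hs' / 2

end

theorem stmt_19_general (n : ℕ)
    (f : EuclideanSpace ℝ (Fin n) → ℝ)
    (f' : EuclideanSpace ℝ (Fin n) → EuclideanSpace ℝ (Fin n))
    (L : ℝ) (hL : 0 < L)
    (hgrad : ∀ x, HasGradientAt f (f' x) x)
    (hupper : ConvexOn ℝ univ (fun x => L / 2 * ‖x‖ ^ 2 - f x))
    (hlower : ConvexOn ℝ univ (fun x => f x - (-L) / 2 * ‖x‖ ^ 2))
    (xstar : EuclideanSpace ℝ (Fin n))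
    (x1 : EuclideanSpace ℝ (Fin n))
    (γ μs : ℝ) (hγ : γ ∈ Ioc (0 : ℝ) 1) (hμs : 0 < μs)
    (hqsc : ∀ x, f x ≤ f x1 →
      f x + (1 / γ) * ⟪f' x, xstar - x⟫ + μs / 2 * ‖xstar - x‖ ^ 2 ≤ f xstar)
    (x2 : EuclideanSpace ℝ (Fin n)) (hx2 : x2 = x1 - (1 / L) • f' x1) :
    f x2 - f xstar ≤
      (2 * L - 2 * μs * γ ^ 2) / (2 * L + μs * γ ^ 2) * (f x1 - f xstar) := by
  have hup (x y) := le_add_inner_add_sq_of_convexOn_sq_sub (hgrad x) hupper y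
  have hlo (x y) : f x + ⟪f' x, y - x⟫ - L / 2 * ‖y - x‖ ^ 2 ≤ f y := by
    linarith [add_inner_add_sq_le_of_convexOn_sub_sq (hgrad x) hlower y]
  have hdecr := apply_sub_smul_gradient_le hL hup hlo x1
  rw [← hx2] at hdecr
  have hx2_sublevel : f x2 ≤ f x1 := by
    have : 0 ≤ ‖f' x1‖ ^ 2 / (2 * L) + ‖f' x2‖ ^ 2 / (4 * L) := by positivity
    linarith
  exact sub_le_of_quasarConvex_of_gradient_step hL hγ.1.ne' hμs.le hx2 hdecr
    (hqsc x1 le_rfl) (hqsc x2 hx2_sublevel)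

theorem stmt_19 (n : ℕ) (hn : 1 ≤ n)
    (f : EuclideanSpace ℝ (Fin n) → ℝ)
    (f' : EuclideanSpace ℝ (Fin n) → EuclideanSpace ℝ (Fin n))
    (L : ℝ) (hL : 0 < L)
    (hgrad : ∀ x, HasGradientAt f (f' x) x)
    (hupper : ConvexOn ℝ univ (fun x => L / 2 * ‖x‖ ^ 2 - f x))
    (hlower : ConvexOn ℝ univ (fun x => f x - (-L) / 2 * ‖x‖ ^ 2))
    (xstar : EuclideanSpace ℝ (Fin n)) (hmin : ∀ z, f xstar ≤ f z)
    (x1 : EuclideanSpace ℝ (Fin n))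
    (γ μs : ℝ) (hγ : γ ∈ Ioc (0 : ℝ) 1) (hμs : 0 < μs) (hμsL : μs * γ ^ 2 ≤ L)
    (hqsc : ∀ x, f x ≤ f x1 →
      f x + (1 / γ) * ⟪f' x, xstar - x⟫ + μs / 2 * ‖xstar - x‖ ^ 2 ≤ f xstar)
    (x2 : EuclideanSpace ℝ (Fin n)) (hx2 : x2 = x1 - (1 / L) • f' x1) :
    f x2 - f xstar ≤
      (2 * L - 2 * μs * γ ^ 2) / (2 * L + μs * γ ^ 2) * (f x1 - f xstar) :=
  stmt_19_general n f f' L hL hgrad hupper hlower xstar x1 γ μs hγ hμs hqsc x2 hx2
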